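/- arXiv:1210.6259 — 2 statements merged into one kernel-verified Lean document; each statement's English description precedes it below -/
import Mathlib

section
/- Let X be a random point of S with law μ, let p ≥ 0, and let x, y ∈ S be points with λ₂(x) < ∞ and λ₂(y) < ∞. Then E[(1 − K(X,x)p)₊ · (1 − K(X,y)p)₊] ≤ 1 − (λ(x)+λ(y))p + (1/2)(λ₂(x)+λ₂(y))² p², where (t)₊ = max(t,0). -/
open MeasureTheory Filter Set

noncomputable section

/-- The edge probability scaling `pₙ = log n / n`. -/
def pEdge (n : ℕ) : ℝ := Real.log n / n

/-- `λ(x) = ∫ K(x,y) dμ(y)`. -/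
def lamFun {S : Type*} [MeasurableSpace S] (K : S → S → ℝ) (μ : Measure S) (x : S) : ℝ :=
  ∫ y, K x y ∂μ

/-- `λ₂(x) = (∫ K(x,y)² dμ(y))^{1/2}`. -/
def lam2Fun {S : Type*} [MeasurableSpace S] (K : S → S → ℝ) (μ : Measure S) (x : S) : ℝ :=
  Real.sqrt (∫ y, (K x y) ^ 2 ∂μ)

/-- The isolation parameter `Λ = essinf λ`. -/
def isolParam {S : Type*} [MeasurableSpace S] (K : S → S → ℝ) (μ : Measure S) : ℝ :=
  essInf (lamFun K μ) μ

/-- `‖λ₂‖_∞`, the `μ`-essential supremum of `λ₂`. -/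
def lam2Norm {S : Type*} [MeasurableSpace S] (K : S → S → ℝ) (μ : Measure S) : ℝ :=
  essSup (lam2Fun K μ) μ

/-- A kernel is irreducible if there is no measurable `A` with `0 < μ A < 1` and
`K = 0` `(μ ⊗ μ)`-a.e. on `A × Aᶜ`. -/
def IrreducibleKernel {S : Type*} [MeasurableSpace S] (K : S → S → ℝ) (μ : Measure S) : Prop :=
  ¬ ∃ A : Set S, MeasurableSet A ∧ 0 < μ A ∧ μ A < 1 ∧
      ∀ᵐ p ∂(μ.prod μ), p.1 ∈ A → p.2 ∈ Aᶜ → K p.1 p.2 = 0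

/-- The inhomogeneous random graph `G(n,K)` as a deterministic function of the points `x` and
of auxiliary i.i.d. uniforms `u`: the pair `{i,j}` (`i ≠ j`) is an edge iff
`u (min i j) (max i j) < min 1 (K (x i) (x j) * pₙ)`. -/
def graphOf {S : Type*} (K : S → S → ℝ) (n : ℕ) (x : Fin n → S) (u : Fin n → Fin n → ℝ) :
    SimpleGraph (Fin n) where
  Adj i j := i ≠ j ∧ u (min i j) (max i j) < min 1 (K (x (min i j)) (x (max i j)) * pEdge n)
  symm := ⟨by
    rintro i j ⟨hne, hlt⟩
    exact ⟨hne.symm, by rwa [min_comm j i, max_comm j i]⟩⟩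
  loopless := ⟨fun i h => h.1 rfl⟩

/-- The law of the randomness underlying `G(n,K)`: `n` i.i.d. points with law `μ` together with
an independent array of i.i.d. uniforms on `[0,1]`. -/
def graphMeasure {S : Type*} [MeasurableSpace S] (μ : Measure S) (n : ℕ) :
    Measure ((Fin n → S) × (Fin n → Fin n → ℝ)) :=
  (Measure.pi fun _ : Fin n => μ).prod
    (Measure.pi fun _ : Fin n => Measure.pi fun _ : Fin n => volume.restrict (Icc (0:ℝ) 1))

/-! Pointwise, `(1 - a)₊ (1 - b)₊ ≤ 1 - (a + b) + (a + b)² / 2` for all real `a, b`: for `a, b ≤ 1`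
this is `ab ≤ (a + b)² / 2`, and otherwise the left side vanishes while the right side is
`((a + b - 1)² + 1) / 2`. Integrating with `a = K(X,x)p`, `b = K(X,y)p` leaves the second moment
`E[(K(X,x) + K(X,y))²]`, which Cauchy–Schwarz bounds by `(λ₂(x) + λ₂(y))²`. -/

section

variable {α : Type*} [MeasurableSpace α] {μ : Measure α}

theorem max_one_sub_mul_max_one_sub_le (a b : ℝ) :
    max (1 - a) 0 * max (1 - b) 0 ≤ 1 - (a + b) + (a + b) ^ 2 / 2 := by
  rcases le_total a 1 with ha | ha
  · rcases le_total b 1 with hb | hb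
    · rw [max_eq_left (by linarith), max_eq_left (by linarith)]
      nlinarith [sq_nonneg a, sq_nonneg b]
    · rw [max_eq_right (by linarith : 1 - b ≤ 0), mul_zero]
      nlinarith [sq_nonneg (a + b - 1)]
  · rw [max_eq_right (by linarith : 1 - a ≤ 0), zero_mul]
    nlinarith [sq_nonneg (a + b - 1)]

theorem integral_mul_le_sqrt_integral_sq_mul_sqrt_integral_sq {f g : α → ℝ}
    (hf : MemLp f 2 μ) (hg : MemLp g 2 μ) :
    ∫ a, f a * g a ∂μ ≤ √(∫ a, f a ^ 2 ∂μ) * √(∫ a, g a ^ 2 ∂μ) := by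
  have integral_norm_rpow_two : ∀ h : α → ℝ, ∫ a, ‖h a‖ ^ (2 : ℝ) ∂μ = ∫ a, h a ^ 2 ∂μ :=
    fun h => integral_congr_ae (Eventually.of_forall fun a => by simp)
  calc ∫ a, f a * g a ∂μ ≤ |∫ a, f a * g a ∂μ| := le_abs_self _
    _ ≤ ∫ a, ‖f a‖ * ‖g a‖ ∂μ := by
        simpa only [abs_mul, Real.norm_eq_abs] using
          abs_integral_le_integral_abs (f := fun a => f a * g a)
    _ ≤ (∫ a, ‖f a‖ ^ (2 : ℝ) ∂μ) ^ (1 / 2 : ℝ) * (∫ a, ‖g a‖ ^ (2 : ℝ) ∂μ) ^ (1 / 2 : ℝ) :=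
        integral_mul_norm_le_Lp_mul_Lq Real.HolderConjugate.two_two (by simpa using hf)
          (by simpa using hg)
    _ = √(∫ a, f a ^ 2 ∂μ) * √(∫ a, g a ^ 2 ∂μ) := by
        rw [integral_norm_rpow_two, integral_norm_rpow_two, Real.sqrt_eq_rpow, Real.sqrt_eq_rpow]

theorem integral_add_sq_le {f g : α → ℝ} (hf : MemLp f 2 μ) (hg : MemLp g 2 μ) :
    ∫ a, (f a + g a) ^ 2 ∂μ ≤ (√(∫ a, f a ^ 2 ∂μ) + √(∫ a, g a ^ 2 ∂μ)) ^ 2 := by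
  have hfg : Integrable (fun a => 2 * (f a * g a)) μ := (hf.integrable_mul hg).const_mul 2
  have hfsq_fg : Integrable (fun a => f a ^ 2 + 2 * (f a * g a)) μ := hf.integrable_sq.add hfg
  have hexpand : ∫ a, (f a + g a) ^ 2 ∂μ
      = ∫ a, f a ^ 2 ∂μ + 2 * ∫ a, f a * g a ∂μ + ∫ a, g a ^ 2 ∂μ := by
    simp_rw [add_sq, mul_assoc]
    rw [integral_add hfsq_fg hg.integrable_sq, integral_add hf.integrable_sq hfg,
      integral_const_mul]
  rw [hexpand, add_sq, Real.sq_sqrt (integral_nonneg fun _ => sq_nonneg _),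
    Real.sq_sqrt (integral_nonneg fun _ => sq_nonneg _)]
  linarith [integral_mul_le_sqrt_integral_sq_mul_sqrt_integral_sq hf hg]

theorem integral_max_one_sub_mul_max_one_sub_le [IsProbabilityMeasure μ] {f g : α → ℝ}
    (hf : MemLp f 2 μ) (hg : MemLp g 2 μ) (p : ℝ) :
    ∫ a, max (1 - f a * p) 0 * max (1 - g a * p) 0 ∂μ ≤
      1 - (∫ a, f a ∂μ + ∫ a, g a ∂μ) * p
        + (1 / 2) * (√(∫ a, f a ^ 2 ∂μ) + √(∫ a, g a ^ 2 ∂μ)) ^ 2 * p ^ 2 := by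
  have hfg : Integrable (fun a => (f a + g a) * p) μ :=
    ((hf.integrable one_le_two).add (hg.integrable one_le_two)).mul_const p
  have hsq : Integrable (fun a => (f a + g a) ^ 2 * p ^ 2 / 2) μ :=
    ((hf.add hg).integrable_sq.mul_const _).div_const 2
  have hlin : Integrable (fun a => 1 - (f a + g a) * p) μ := (integrable_const 1).sub hfg
  calc ∫ a, max (1 - f a * p) 0 * max (1 - g a * p) 0 ∂μ
      ≤ ∫ a, 1 - (f a + g a) * p + (f a + g a) ^ 2 * p ^ 2 / 2 ∂μ := by
        refine integral_mono_of_nonneg (Eventually.of_forall fun a => by positivity)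
          (hlin.add hsq) (Eventually.of_forall fun a => ?_)
        have := max_one_sub_mul_max_one_sub_le (f a * p) (g a * p)
        linarith
    _ = 1 - (∫ a, f a ∂μ + ∫ a, g a ∂μ) * p + (∫ a, (f a + g a) ^ 2 ∂μ) * p ^ 2 / 2 := by
        rw [integral_add hlin hsq, integral_sub (integrable_const 1) hfg,
          integral_div, integral_mul_const, integral_mul_const,
          integral_add (hf.integrable one_le_two) (hg.integrable one_le_two)]
        simp
    _ ≤ _ := by nlinarith [integral_add_sq_le hf hg, sq_nonneg p]

end

theorem product_positive_part_bound_general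
    {S : Type*}
    [MeasurableSpace S]
    (μ : Measure S) [IsProbabilityMeasure μ] (K : S → S → ℝ)
    (hKsymm : ∀ x y, K x y = K y x)
    (hKmeas : Measurable (Function.uncurry K))
    (p : ℝ) (x y : S)
    (hx : Integrable (fun z => (K x z) ^ 2) μ)
    (hy : Integrable (fun z => (K y z) ^ 2) μ) :
    ∫ z, max (1 - K z x * p) 0 * max (1 - K z y * p) 0 ∂μ ≤
      1 - (lamFun K μ x + lamFun K μ y) * p
        + (1/2) * (lam2Fun K μ x + lam2Fun K μ y) ^ 2 * p ^ 2 := by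
  have memLp_two : ∀ w, Integrable (fun z => K w z ^ 2) μ → MemLp (K w) 2 μ := fun w =>
    (memLp_two_iff_integrable_sq (hKmeas.comp measurable_prodMk_left).aestronglyMeasurable).2
  simp only [hKsymm _ x, hKsymm _ y]
  exact integral_max_one_sub_mul_max_one_sub_le (memLp_two x hx) (memLp_two y hy) p

/-- **Pointwise product bound** (equations (2.3)–(2.4)).  For `p ≥ 0` and points `x, y` with
`λ₂(x), λ₂(y) < ∞`,
`E[(1-K(X,x)p)₊ (1-K(X,y)p)₊] ≤ 1 - (λ(x)+λ(y))p + ½(λ₂(x)+λ₂(y))² p²`. -/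
theorem product_positive_part_bound
    {S : Type*} [MetricSpace S] [TopologicalSpace.SeparableSpace S]
    [MeasurableSpace S] [BorelSpace S]
    (μ : Measure S) [IsProbabilityMeasure μ] (K : S → S → ℝ)
    (hKsymm : ∀ x y, K x y = K y x)
    (hKnonneg : ∀ x y, 0 ≤ K x y)
    (hKmeas : Measurable (Function.uncurry K))
    (hKint : Integrable (Function.uncurry K) (μ.prod μ))
    (p : ℝ) (hp : 0 ≤ p) (x y : S)
    (hx : Integrable (fun z => (K x z) ^ 2) μ)
    (hy : Integrable (fun z => (K y z) ^ 2) μ) :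
    ∫ z, max (1 - K z x * p) 0 * max (1 - K z y * p) 0 ∂μ ≤
      1 - (lamFun K μ x + lamFun K μ y) * p
        + (1/2) * (lam2Fun K μ x + lam2Fun K μ y) ^ 2 * p ^ 2 :=
  product_positive_part_bound_general μ K hKsymm hKmeas p x y hx hy
end
end

section
/- For the kernel K on [0,1], for every n ≥ 3 the probability that G(n,K) is disconnected is at least (1 − 2/n)^{n−1}; in particular liminf_{n→∞} P(G(n,K) is disconnected) ≥ e^{−2} > 0, even though Λ = c/2 can be made arbitrarily large by choosing c large. -/
open MeasureTheory Filter Set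

noncomputable section

/-- The example kernel of Section 4 on `S = [0,1]`:
`K(x,y) = (c/x) 1_{[x/2,x]}(y) + (c/y) 1_{[y/2,y]}(x)` for `x, y ∈ (0,1]`, and `K = 0` when
`x = 0` or `y = 0` (note that both clauses below indeed vanish in that case). -/
def Kex (c : ℝ) (x y : ℝ) : ℝ :=
  (if y ∈ Set.Icc (x/2) x then c / x else 0) + (if x ∈ Set.Icc (y/2) y then c / y else 0)

/-!
If `x i < a` and every other point exceeds `2a`, vertex `i` is isolated, because `K(x, y) = 0`
whenever `y > 2x`. For `a = 1/n` these `n` events are disjoint and each has probability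
`(1/n)(1 - 2/n)^{n-1}`, so `G(n,K)` is disconnected with probability at least
`(1 - 2/n)^{n-1} → e⁻²`.
-/

open scoped Topology ENNReal

instance : IsProbabilityMeasure (volume.restrict (Icc (0:ℝ) 1)) :=
  ⟨by simp [Real.volume_Icc]⟩

instance {S : Type*} [MeasurableSpace S] (μ : Measure S) [IsProbabilityMeasure μ] (n : ℕ) :
    IsProbabilityMeasure (graphMeasure μ n) := by
  unfold graphMeasure; infer_instance

lemma Kex_comm (c x y : ℝ) : Kex c x y = Kex c y x := add_comm _ _

lemma Kex_eq_zero_of_two_mul_lt {c a b : ℝ} (ha : 0 ≤ a) (hab : 2 * a < b) : Kex c a b = 0 := by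
  have hb : b ∉ Icc (a / 2) a := fun h => by linarith [h.2]
  have ha' : a ∉ Icc (b / 2) b := fun h => by linarith [h.1]
  simp [Kex, hb, ha']

lemma kernel_ne_zero_of_graphOf_adj {S : Type*} {K : S → S → ℝ} (hK : ∀ a b, K a b = K b a)
    {n : ℕ} {x : Fin n → S} {u : Fin n → Fin n → ℝ} (hu : ∀ j k, 0 ≤ u j k) {i j : Fin n}
    (hij : (graphOf K n x u).Adj i j) : K (x i) (x j) ≠ 0 := by
  obtain ⟨-, hlt⟩ := hij
  intro h0
  have hmin : K (x (min i j)) (x (max i j)) = 0 := by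
    rcases le_total i j with h | h
    · rwa [min_eq_left h, max_eq_right h]
    · rwa [min_eq_right h, max_eq_left h, hK]
  rw [hmin, zero_mul, min_eq_right zero_le_one] at hlt
  exact hlt.not_ge (hu _ _)

def isolatingBox (n : ℕ) (a : ℝ) (i : Fin n) : Set (Fin n → ℝ) :=
  univ.pi (Function.update (fun _ => Ioc (2 * a) 1) i (Ico 0 a))

lemma mem_isolatingBox {n : ℕ} {a : ℝ} {i : Fin n} {x : Fin n → ℝ} :
    x ∈ isolatingBox n a i ↔ x i ∈ Ico 0 a ∧ ∀ j, j ≠ i → x j ∈ Ioc (2 * a) 1 := by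
  simp only [isolatingBox, mem_univ_pi]
  refine ⟨fun h => ⟨by simpa using h i, fun j hj => by simpa [hj] using h j⟩, fun h j => ?_⟩
  rcases eq_or_ne j i with rfl | hj
  · simpa using h.1
  · simpa [hj] using h.2 j hj

lemma isolatingBox_disjoint (n : ℕ) {a : ℝ} (ha : 0 ≤ a) :
    Pairwise (Function.onFun Disjoint (isolatingBox n a)) := by
  intro i j hij
  refine Set.disjoint_left.mpr fun x hxi hxj => ?_
  linarith [(mem_isolatingBox.mp hxi).1.2, (mem_isolatingBox.mp hxj).2 i hij |>.1]

lemma not_connected_graphOf_Kex_of_mem_isolatingBox (c : ℝ) {n : ℕ} (hn : 2 ≤ n) {a : ℝ}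
    {x : Fin n → ℝ} {u : Fin n → Fin n → ℝ} {i : Fin n} (hx : x ∈ isolatingBox n a i)
    (hu : ∀ j k, 0 ≤ u j k) : ¬ (graphOf (Kex c) n x u).Connected := by
  have : Nontrivial (Fin n) := Fin.nontrivial_iff_two_le.mpr hn
  intro hconn
  obtain ⟨j, hij⟩ := hconn.preconnected.exists_adj_of_nontrivial i
  obtain ⟨hxi, hxj⟩ := mem_isolatingBox.mp hx
  exact kernel_ne_zero_of_graphOf_adj (Kex_comm c) hu hij
    (Kex_eq_zero_of_two_mul_lt hxi.1 (by linarith [hxi.2, (hxj j hij.ne.symm).1]))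

lemma pi_uniform_isolatingBox (n : ℕ) {a : ℝ} (ha : 0 ≤ a) (ha1 : 2 * a ≤ 1) (i : Fin n) :
    Measure.pi (fun _ : Fin n => volume.restrict (Icc (0:ℝ) 1)) (isolatingBox n a i) =
      ENNReal.ofReal a * ENNReal.ofReal (1 - 2 * a) ^ (n - 1) := by
  have hlow : volume.restrict (Icc (0:ℝ) 1) (Ico 0 a) = ENNReal.ofReal a := by
    rw [Measure.restrict_apply measurableSet_Ico,
      inter_eq_left.mpr (Ico_subset_Icc_self.trans (Icc_subset_Icc_right (by linarith))),
      Real.volume_Ico, sub_zero]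
  have hhigh : volume.restrict (Icc (0:ℝ) 1) (Ioc (2 * a) 1) = ENNReal.ofReal (1 - 2 * a) := by
    rw [Measure.restrict_apply measurableSet_Ioc,
      inter_eq_left.mpr (Ioc_subset_Icc_self.trans (Icc_subset_Icc_left (by linarith))),
      Real.volume_Ioc]
  rw [isolatingBox, Measure.pi_pi, Fintype.prod_eq_mul_prod_compl i, Function.update_self, hlow,
    Finset.prod_congr rfl fun j hj => by
      rw [Function.update_of_ne (Finset.mem_compl.mp hj |> Finset.notMem_singleton.mp)],
    hhigh, Finset.prod_const, Finset.card_compl, Finset.card_singleton, Fintype.card_fin]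

lemma uniformArray_unitCube (n : ℕ) :
    (Measure.pi fun _ : Fin n => Measure.pi fun _ : Fin n => volume.restrict (Icc (0:ℝ) 1))
      (univ.pi fun _ => univ.pi fun _ => Icc 0 1) = 1 := by
  simp only [Measure.pi_pi, Measure.restrict_apply_self, Real.volume_Icc]
  norm_num

lemma le_graphMeasure_not_connected (c : ℝ) {n : ℕ} (hn : 2 ≤ n) {a : ℝ} (ha : 0 ≤ a)
    (ha1 : 2 * a ≤ 1) :
    n * (ENNReal.ofReal a * ENNReal.ofReal (1 - 2 * a) ^ (n - 1)) ≤
      graphMeasure (volume.restrict (Icc (0:ℝ) 1)) n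
        {ω | ¬ (graphOf (Kex c) n ω.1 ω.2).Connected} := by
  set C : Set (Fin n → Fin n → ℝ) := univ.pi fun _ => univ.pi fun _ => Icc 0 1
  have hmeas : ∀ i, MeasurableSet (isolatingBox n a i ×ˢ C) := fun i =>
    (MeasurableSet.univ_pi fun j => by
      rcases eq_or_ne j i with rfl | hj
      · simp [measurableSet_Ico]
      · simp [hj, measurableSet_Ioc]).prod
    (MeasurableSet.univ_pi fun _ => MeasurableSet.univ_pi fun _ => measurableSet_Icc)
  have hdisj : Pairwise (Function.onFun Disjoint fun i => isolatingBox n a i ×ˢ C) :=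
    fun i j hij => (isolatingBox_disjoint n ha hij).set_prod_left _ _
  calc (n : ℝ≥0∞) * (ENNReal.ofReal a * ENNReal.ofReal (1 - 2 * a) ^ (n - 1))
      = graphMeasure (volume.restrict (Icc (0:ℝ) 1)) n (⋃ i, isolatingBox n a i ×ˢ C) := by
        rw [graphMeasure, measure_iUnion hdisj hmeas, tsum_fintype]
        simp only [Measure.prod_prod, pi_uniform_isolatingBox n ha ha1, C, uniformArray_unitCube,
          mul_one, Finset.sum_const, Finset.card_univ, Fintype.card_fin, nsmul_eq_mul]
    _ ≤ _ := measure_mono <| iUnion_subset fun i ⟨x, u⟩ ⟨hx, hu⟩ =>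
        not_connected_graphOf_Kex_of_mem_isolatingBox c hn hx fun j k =>
          (hu j trivial k trivial).1

lemma ofReal_le_graphMeasure_not_connected (c : ℝ) {n : ℕ} (hn : 3 ≤ n) :
    ENNReal.ofReal ((1 - 2 / (n : ℝ)) ^ (n - 1)) ≤
      graphMeasure (volume.restrict (Icc (0:ℝ) 1)) n
        {ω | ¬ (graphOf (Kex c) n ω.1 ω.2).Connected} := by
  have hn' : (3 : ℝ) ≤ n := by exact_mod_cast hn
  have hn0 : (0 : ℝ) < n := by linarith
  have h2n : 2 * (1 / (n : ℝ)) ≤ 1 := by rw [mul_one_div, div_le_one hn0]; linarith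
  convert le_graphMeasure_not_connected c (n := n) (by omega) (by positivity) h2n using 1
  rw [← mul_assoc, ← ENNReal.ofReal_natCast n, ← ENNReal.ofReal_mul hn0.le,
    mul_one_div_cancel hn0.ne', ENNReal.ofReal_one, one_mul, ← ENNReal.ofReal_pow (by linarith),
    mul_one_div]

lemma tendsto_one_add_div_pow_pred_exp (t : ℝ) :
    Tendsto (fun n : ℕ => (1 + t / n) ^ (n - 1)) atTop (𝓝 (Real.exp t)) := by
  have hbase : Tendsto (fun n : ℕ => 1 + t / n) atTop (𝓝 1) := by
    simpa using (tendsto_const_div_atTop_nhds_zero_nat t).const_add 1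
  rw [← div_one (Real.exp t)]
  refine ((Real.tendsto_one_add_div_pow_exp t).div hbase one_ne_zero).congr' ?_
  filter_upwards [eventually_ge_atTop 1, hbase.eventually_ne one_ne_zero] with n hn hne
  obtain ⟨m, rfl⟩ := Nat.exists_eq_add_of_le' hn
  rw [Pi.div_apply, Nat.add_sub_cancel, pow_succ, mul_div_cancel_right₀ _ hne]

lemma le_liminf_of_tendsto_of_eventually_le {β α : Type*} [ConditionallyCompleteLinearOrder α]
    [TopologicalSpace α] [OrderTopology α] {f : Filter β} [f.NeBot] {u v : β → α} {a : α}
    (hu : Tendsto u f (𝓝 a)) (huv : ∀ᶠ x in f, u x ≤ v x) (hv : IsBoundedUnder (· ≤ ·) f v) :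
    a ≤ liminf v f :=
  hu.liminf_eq ▸ liminf_le_liminf huv hu.isBoundedUnder_ge hv.isCoboundedUnder_ge

theorem example_kernel_disconnected_general (c : ℝ) :
    (∀ n : ℕ, 3 ≤ n →
      ENNReal.ofReal ((1 - 2 / (n : ℝ)) ^ (n - 1)) ≤
        graphMeasure (volume.restrict (Set.Icc (0:ℝ) 1)) n
          {ω | ¬ (graphOf (Kex c) n ω.1 ω.2).Connected}) ∧
    Real.exp (-2) ≤
      liminf (fun n : ℕ =>
        (graphMeasure (volume.restrict (Set.Icc (0:ℝ) 1)) n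
          {ω | ¬ (graphOf (Kex c) n ω.1 ω.2).Connected}).toReal) atTop ∧
    0 < Real.exp (-2) := by
  refine ⟨fun n hn => ofReal_le_graphMeasure_not_connected c hn, ?_, Real.exp_pos _⟩
  have hlim : Tendsto (fun n : ℕ => (1 - 2 / (n : ℝ)) ^ (n - 1)) atTop
      (𝓝 (Real.exp (-2))) := by
    simpa [neg_div, ← sub_eq_add_neg] using tendsto_one_add_div_pow_pred_exp (-2)
  refine le_liminf_of_tendsto_of_eventually_le hlim ?_ ⟨1, eventually_map.mpr <| .of_forall
    fun n => ENNReal.toReal_le_of_le_ofReal zero_le_one (by simpa using prob_le_one)⟩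
  filter_upwards [eventually_ge_atTop 3] with n hn
  exact (ENNReal.ofReal_le_iff_le_toReal (measure_ne_top _ _)).mp
    (ofReal_le_graphMeasure_not_connected c hn)

/-- **The example kernel stays disconnected with positive probability** (Section 4):
for all `n ≥ 3`, `P(G(n,K) is disconnected) ≥ (1 - 2/n)^{n-1}`, hence
`liminf_n P(G(n,K) is disconnected) ≥ e⁻² > 0` — even though `Λ = c/2` can be made
arbitrarily large by taking `c` large (the statement holds for every `c > 0`). -/
theorem example_kernel_disconnected (c : ℝ) (hc : 0 < c) :
    (∀ n : ℕ, 3 ≤ n →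
      ENNReal.ofReal ((1 - 2 / (n : ℝ)) ^ (n - 1)) ≤
        graphMeasure (volume.restrict (Set.Icc (0:ℝ) 1)) n
          {ω | ¬ (graphOf (Kex c) n ω.1 ω.2).Connected}) ∧
    Real.exp (-2) ≤
      liminf (fun n : ℕ =>
        (graphMeasure (volume.restrict (Set.Icc (0:ℝ) 1)) n
          {ω | ¬ (graphOf (Kex c) n ω.1 ω.2).Connected}).toReal) atTop ∧
    0 < Real.exp (-2) :=
  example_kernel_disconnected_general c
end
end
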